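/- For every k ∈ (0,1), the function k ↦ ι₄(k)/√(1 − k²) is differentiable at k with derivative k·ι₂(k)/(1 − k²)^{3/2}, where ι₄(k) = (2 − k²)K(k) − 2E(k) and ι₂(k) = K(k) − E(k). -/

import Mathlib

/-!
Write `J_p(k) = ∫₀^{π/2} (1 - k² sin² t)^p dt`, so that `K = J_{-1/2}` and `E = J_{1/2}`.
Differentiating under the integral sign and using `k² sin² t = 1 - (1 - k² sin² t)` gives
`k J_p' = 2p (J_p - J_{p-1})`, while integrating the derivative of
`k² sin t cos t (1 - k² sin² t)^p` over `[0, π/2]` gives a three-term recurrence, which at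
`p = -1/2` reads `E = (1 - k²) J_{-3/2}`.
Together these yield the classical formulas `k E' = E - K` and `k (1 - k²) K' = E - (1 - k²) K`,
and the theorem follows by the quotient rule.
-/

open Real Set Filter Topology

/-- Complete elliptic integral of the first kind. -/
noncomputable def K (k : ℝ) : ℝ :=
  ∫ t in (0:ℝ)..(π/2), 1 / Real.sqrt (1 - k^2 * Real.sin t ^ 2)

/-- Complete elliptic integral of the second kind. -/
noncomputable def E (k : ℝ) : ℝ :=
  ∫ t in (0:ℝ)..(π/2), Real.sqrt (1 - k^2 * Real.sin t ^ 2)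

noncomputable def ι₂ (k : ℝ) : ℝ := K k - E k

noncomputable def ι₄ (k : ℝ) : ℝ := (2 - k^2) * K k - 2 * E k

open MeasureTheory

theorem intervalIntegral.hasDerivAt_integral_of_continuousOn
    {𝕜 V : Type*} [RCLike 𝕜] [NormedAddCommGroup V] [NormedSpace ℝ V] [NormedSpace 𝕜 V]
    {F F' : 𝕜 → ℝ → V} {U : Set 𝕜} {x₀ : 𝕜} {a b : ℝ} (hU : U ∈ 𝓝 x₀)
    (hF : ∀ x ∈ U, ContinuousOn (F x) (uIcc a b))
    (hF' : ContinuousOn (Function.uncurry F') (U ×ˢ uIcc a b))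
    (hdiff : ∀ x ∈ U, ∀ t ∈ uIcc a b, HasDerivAt (F · t) (F' x t) x) :
    HasDerivAt (fun x => ∫ t in a..b, F x t) (∫ t in a..b, F' x₀ t) x₀ := by
  obtain ⟨r, hr, hrU⟩ := Metric.nhds_basis_closedBall.mem_iff.1 hU
  obtain ⟨C, hC⟩ := ((isCompact_closedBall x₀ r).prod isCompact_uIcc)
    |>.exists_bound_of_continuousOn (hF'.mono (prod_mono hrU le_rfl))
  have hx₀ : x₀ ∈ U := mem_of_mem_nhds hU
  refine (intervalIntegral.hasDerivAt_integral_of_dominated_loc_of_deriv_le (bound := fun _ => C)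
    (Metric.closedBall_mem_nhds x₀ hr) ?_ ((hF x₀ hx₀).intervalIntegrable) ?_ ?_
    intervalIntegrable_const ?_).2
  · filter_upwards [hU] with x hx
    exact (hF x hx).mono uIoc_subset_uIcc |>.aestronglyMeasurable measurableSet_uIoc
  · refine ContinuousOn.aestronglyMeasurable ?_ measurableSet_uIoc
    exact hF'.comp (continuousOn_const.prodMk continuousOn_id)
      fun t ht => ⟨hx₀, uIoc_subset_uIcc ht⟩
  · exact Eventually.of_forall fun t ht x hx => hC (x, t) ⟨hx, uIoc_subset_uIcc ht⟩
  · exact Eventually.of_forall fun t ht x hx => hdiff x (hrU hx) t (uIoc_subset_uIcc ht)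

noncomputable def ellipticJ (p k : ℝ) : ℝ :=
  ∫ t in (0:ℝ)..(π/2), (1 - k ^ 2 * sin t ^ 2) ^ p

lemma setOf_sq_lt_one_mem_nhds {k : ℝ} (hk : k ^ 2 < 1) : {x : ℝ | x ^ 2 < 1} ∈ 𝓝 k :=
  (isOpen_lt (continuous_pow 2) continuous_const).mem_nhds hk

lemma one_sub_sq_mul_sin_sq_nonneg {k : ℝ} (hk : k ^ 2 ≤ 1) (t : ℝ) :
    0 ≤ 1 - k ^ 2 * sin t ^ 2 := by
  nlinarith [sin_sq_le_one t, sq_nonneg k, sq_nonneg (sin t)]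

lemma one_sub_sq_mul_sin_sq_pos {k : ℝ} (hk : k ^ 2 < 1) (t : ℝ) :
    0 < 1 - k ^ 2 * sin t ^ 2 := by
  nlinarith [sin_sq_le_one t, sq_nonneg k, sq_nonneg (sin t)]

lemma continuous_one_sub_sq_mul_sin_sq_rpow (p : ℝ) {k : ℝ} (hk : k ^ 2 < 1) :
    Continuous fun t => (1 - k ^ 2 * sin t ^ 2) ^ p := by
  refine Continuous.rpow_const (by fun_prop) fun t => Or.inl ?_
  exact (one_sub_sq_mul_sin_sq_pos hk t).ne'

lemma intervalIntegrable_one_sub_sq_mul_sin_sq_rpow (p : ℝ) {k : ℝ} (hk : k ^ 2 < 1) :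
    IntervalIntegrable (fun t => (1 - k ^ 2 * sin t ^ 2) ^ p) volume 0 (π / 2) :=
  (continuous_one_sub_sq_mul_sin_sq_rpow p hk).intervalIntegrable _ _

theorem hasDerivAt_ellipticJ (p : ℝ) {k : ℝ} (hk₀ : k ≠ 0) (hk : k ^ 2 < 1) :
    HasDerivAt (ellipticJ p) (2 * p * (ellipticJ p k - ellipticJ (p - 1) k) / k) k := by
  have hderiv := intervalIntegral.hasDerivAt_integral_of_continuousOn
    (setOf_sq_lt_one_mem_nhds hk)
    (a := 0) (b := π / 2) (F := fun x t => (1 - x ^ 2 * sin t ^ 2) ^ p)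
    (F' := fun x t => p * (1 - x ^ 2 * sin t ^ 2) ^ (p - 1) * -(2 * x * sin t ^ 2))
    (fun x hx => (continuous_one_sub_sq_mul_sin_sq_rpow p hx).continuousOn) ?cont ?diff
  case cont =>
    refine ContinuousOn.mul (ContinuousOn.mul continuousOn_const
      (ContinuousOn.rpow_const (by fun_prop) fun x hx => Or.inl ?_)) (by fun_prop)
    exact (one_sub_sq_mul_sin_sq_pos hx.1 x.2).ne'
  case diff =>
    intro x hx t _
    have hΔ := (one_sub_sq_mul_sin_sq_pos hx t).ne'
    refine ((((hasDerivAt_pow 2 x).mul_const (sin t ^ 2)).const_sub 1).rpow_const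
      (Or.inl hΔ)).congr_deriv ?_
    norm_num
    ring
  refine hderiv.congr_deriv ?_
  rw [ellipticJ, ellipticJ, ← intervalIntegral.integral_sub
    (intervalIntegrable_one_sub_sq_mul_sin_sq_rpow p hk)
    (intervalIntegrable_one_sub_sq_mul_sin_sq_rpow (p - 1) hk),
    ← intervalIntegral.integral_const_mul, ← intervalIntegral.integral_div]
  refine intervalIntegral.integral_congr fun t _ => ?_
  have hΔ := (one_sub_sq_mul_sin_sq_pos hk t).ne'
  simp only [rpow_sub_one hΔ]
  field_simp
  ring

theorem hasDerivAt_sq_mul_sin_mul_cos_mul_rpow (p : ℝ) {k : ℝ} (hk : k ^ 2 < 1) (t : ℝ) :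
    HasDerivAt (fun t => k ^ 2 * (sin t * cos t * (1 - k ^ 2 * sin t ^ 2) ^ p))
      (2 * (p + 1) * (1 - k ^ 2 * sin t ^ 2) ^ (p + 1)
        - (2 * p + 1) * (2 - k ^ 2) * (1 - k ^ 2 * sin t ^ 2) ^ p
        + 2 * p * (1 - k ^ 2) * (1 - k ^ 2 * sin t ^ 2) ^ (p - 1)) t := by
  have hΔ := (one_sub_sq_mul_sin_sq_pos hk t).ne'
  have hpow := ((((hasDerivAt_sin t).pow 2).const_mul (k ^ 2)).const_sub 1).rpow_const
    (p := p) (Or.inl hΔ)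
  refine ((((hasDerivAt_sin t).mul (hasDerivAt_cos t)).mul hpow).const_mul (k ^ 2)).congr_deriv ?_
  simp only [Pi.pow_apply, Pi.mul_apply]
  rw [rpow_add_one hΔ, rpow_sub_one hΔ]
  field_simp
  linear_combination k ^ 2 * (1 - (2 * p + 1) * k ^ 2 * sin t ^ 2)
    * (1 - k ^ 2 * sin t ^ 2) ^ p * cos_sq_add_sin_sq t

theorem ellipticJ_recurrence (p : ℝ) {k : ℝ} (hk : k ^ 2 < 1) :
    2 * (p + 1) * ellipticJ (p + 1) k - (2 * p + 1) * (2 - k ^ 2) * ellipticJ p k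
      + 2 * p * (1 - k ^ 2) * ellipticJ (p - 1) k = 0 := by
  have hI := fun q => intervalIntegrable_one_sub_sq_mul_sin_sq_rpow q hk
  have hFTC := intervalIntegral.integral_eq_sub_of_hasDerivAt
    (fun t _ => hasDerivAt_sq_mul_sin_mul_cos_mul_rpow p hk t)
    ((((hI (p + 1)).const_mul _).sub ((hI p).const_mul _)).add ((hI (p - 1)).const_mul _))
  rw [intervalIntegral.integral_add (((hI (p + 1)).const_mul _).sub ((hI p).const_mul _))
    ((hI (p - 1)).const_mul _), intervalIntegral.integral_sub ((hI (p + 1)).const_mul _)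
    ((hI p).const_mul _)] at hFTC
  simpa [ellipticJ] using hFTC

lemma E_eq_ellipticJ : E = ellipticJ (1 / 2) := by
  ext k
  simp only [E, ellipticJ, sqrt_eq_rpow]

lemma K_eq_ellipticJ {k : ℝ} (hk : k ^ 2 ≤ 1) : K k = ellipticJ (-1 / 2) k := by
  refine intervalIntegral.integral_congr fun t _ => ?_
  rw [neg_div, rpow_neg (one_sub_sq_mul_sin_sq_nonneg hk t), sqrt_eq_rpow, one_div]

lemma E_eq_one_sub_sq_mul_ellipticJ {k : ℝ} (hk : k ^ 2 < 1) :
    E k = (1 - k ^ 2) * ellipticJ (-3 / 2) k := by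
  have h := ellipticJ_recurrence (-1 / 2) hk
  rw [E_eq_ellipticJ]
  norm_num at h ⊢
  linarith

theorem hasDerivAt_E {k : ℝ} (hk₀ : k ≠ 0) (hk : k ^ 2 < 1) :
    HasDerivAt E ((E k - K k) / k) k := by
  rw [K_eq_ellipticJ hk.le, E_eq_ellipticJ]
  convert hasDerivAt_ellipticJ (1 / 2) hk₀ hk using 1
  norm_num

theorem hasDerivAt_K {k : ℝ} (hk₀ : k ≠ 0) (hk : k ^ 2 < 1) :
    HasDerivAt K ((E k - (1 - k ^ 2) * K k) / (k * (1 - k ^ 2))) k := by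
  have hKJ : K =ᶠ[𝓝 k] ellipticJ (-1 / 2) :=
    mem_of_superset (setOf_sq_lt_one_mem_nhds hk) fun x hx => K_eq_ellipticJ (le_of_lt hx)
  refine ((hasDerivAt_ellipticJ (-1 / 2) hk₀ hk).congr_of_eventuallyEq hKJ).congr_deriv ?_
  rw [E_eq_one_sub_sq_mul_ellipticJ hk, K_eq_ellipticJ hk.le]
  have : 1 - k ^ 2 ≠ 0 := by linarith
  field_simp
  norm_num

theorem hasDerivAt_ι₄ {k : ℝ} (hk₀ : k ≠ 0) (hk : k ^ 2 < 1) :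
    HasDerivAt ι₄ (k * (E k - (1 - k ^ 2) * K k) / (1 - k ^ 2)) k := by
  have h := (((hasDerivAt_pow 2 k).const_sub 2).mul (hasDerivAt_K hk₀ hk)).sub
    ((hasDerivAt_E hk₀ hk).const_mul 2)
  refine h.congr_deriv ?_
  have : 1 - k ^ 2 ≠ 0 := by linarith
  field_simp
  ring

/-- For every `k ∈ (0,1)`, the function `k ↦ ι₄(k)/√(1 − k²)` has derivative
`k·ι₂(k)/(1 − k²)^{3/2}` at `k`. -/
theorem hasDerivAt_iota₄_div_sqrt :
    ∀ k ∈ Set.Ioo (0:ℝ) 1,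
      HasDerivAt (fun x => ι₄ x / Real.sqrt (1 - x^2))
        (k * ι₂ k / (1 - k^2) ^ ((3:ℝ)/2)) k := by
  rintro k ⟨hk₀, hk₁⟩
  have hk : k ^ 2 < 1 := by nlinarith
  have hu : 0 < 1 - k ^ 2 := by linarith
  have hsqrt := ((hasDerivAt_pow 2 k).const_sub 1).sqrt hu.ne'
  refine ((hasDerivAt_ι₄ hk₀.ne' hk).div hsqrt (sqrt_pos.2 hu).ne').congr_deriv ?_
  have h32 : (1 - k ^ 2) ^ ((3 : ℝ) / 2) = (1 - k ^ 2) * √(1 - k ^ 2) := by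
    rw [show (3 : ℝ) / 2 = 1 + 1 / 2 by norm_num, rpow_add hu, rpow_one, sqrt_eq_rpow]
  rw [h32, ι₂, ι₄]
  field_simp
  rw [sq_sqrt hu.le]
  ring
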